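/- Let W_0 be an n×n real symmetric positive definite matrix, let V be a finite index set, and let v : V → ℝⁿ. For T ⊆ V define W(T) = W_0 + Σ_{e∈T} v_e v_eᵀ and E(T) = trace(W(T)⁻¹), and set α = λ_min(W_0)/λ_max(W(V)), where λ_min and λ_max denote the smallest and largest eigenvalues. Then α > 0, and for all sets T_A ⊆ T_B ⊆ V and every e ∈ V \ T_B, the supermodularity inequality E(T_A) − E(T_A ∪ {e}) ≥ α · (E(T_B) − E(T_B ∪ {e})) holds. -/

import Mathlib

open Matrix Finset

open scoped MatrixOrder

/-!
By Sherman–Morrison, adding `u uᵀ` to a positive definite `A` lowers `tr A⁻¹` by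
`‖x‖² / (1 + s)`, where `x = A⁻¹u` and `s = uᵀA⁻¹u = xᵀAx`; hence `m • 1 ≤ A ≤ M • 1` gives
`s / M ≤ ‖x‖² ≤ s / m`. Along the Loewner chain
`λ_min(W₀) • 1 ≤ W₀ ≤ W(T_A) ≤ W(T_B) ≤ W(V) ≤ λ_max(W(V)) • 1`
inversion reverses the order, so `s_B ≤ s_A`, and `t ↦ t / (1 + t)` is increasing: the gain at
`W(T_B)` is at most `s_A / (λ_min(W₀) (1 + s_A))`, the gain at `W(T_A)` at least
`s_A / (λ_max(W(V)) (1 + s_A))`.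
-/

namespace Matrix

theorem PosDef.of_le {ι : Type*} {A B : Matrix ι ι ℝ} (hA : A.PosDef) (h : A ≤ B) :
    B.PosDef := by
  simpa using hA.add_posSemidef h

section Fintype

variable {ι : Type*} [Fintype ι]

theorem dotProduct_mulVec_le_of_le {A B : Matrix ι ι ℝ} (h : A ≤ B) (x : ι → ℝ) :
    x ⬝ᵥ A *ᵥ x ≤ x ⬝ᵥ B *ᵥ x := by
  simpa [sub_mulVec, dotProduct_sub] using (le_iff.mp h).dotProduct_mulVec_nonneg x

theorem IsHermitian.dotProduct_mulVec_comm {A : Matrix ι ι ℝ} (hA : A.IsHermitian)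
    (x y : ι → ℝ) : x ⬝ᵥ A *ᵥ y = y ⬝ᵥ A *ᵥ x := by
  rw [dotProduct_mulVec, ← mulVec_transpose, ← conjTranspose_eq_transpose_of_trivial, hA.eq,
    dotProduct_comm]

variable [DecidableEq ι]

theorem inv_add_vecMulVec {K : Type*} [Field K] {A : Matrix ι ι K} (hA : IsUnit A.det)
    (u v : ι → K) (h : 1 + v ⬝ᵥ A⁻¹ *ᵥ u ≠ 0) :
    (A + vecMulVec u v)⁻¹ =
      A⁻¹ - (1 + v ⬝ᵥ A⁻¹ *ᵥ u)⁻¹ • vecMulVec (A⁻¹ *ᵥ u) (v ᵥ* A⁻¹) := by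
  apply inv_eq_right_inv
  set c := v ⬝ᵥ A⁻¹ *ᵥ u
  have hAX : A * vecMulVec (A⁻¹ *ᵥ u) (v ᵥ* A⁻¹) = vecMulVec u (v ᵥ* A⁻¹) := by
    rw [mul_vecMulVec, mulVec_mulVec, mul_nonsing_inv A hA, one_mulVec]
  have huX : vecMulVec u v * vecMulVec (A⁻¹ *ᵥ u) (v ᵥ* A⁻¹) = c • vecMulVec u (v ᵥ* A⁻¹) := by
    rw [vecMulVec_mul_vecMulVec, vecMulVec_smul]
  rw [add_mul, mul_sub, mul_sub, mul_smul_comm, mul_smul_comm, hAX, huX, mul_nonsing_inv A hA,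
    vecMulVec_mul, smul_smul]
  have hc : (1 + c)⁻¹ + (1 + c)⁻¹ * c = 1 := by field_simp
  linear_combination (norm := module) (-hc) • vecMulVec u (v ᵥ* A⁻¹)

theorem dotProduct_inv_mulVec_eq {A : Matrix ι ι ℝ} (hA : IsUnit A.det) (u : ι → ℝ) :
    u ⬝ᵥ A⁻¹ *ᵥ u = (A⁻¹ *ᵥ u) ⬝ᵥ A *ᵥ (A⁻¹ *ᵥ u) := by
  rw [mulVec_mulVec, mul_nonsing_inv A hA, one_mulVec, dotProduct_comm]

theorem dotProduct_inv_mulVec_le_of_le {A B : Matrix ι ι ℝ} (hA : A.PosDef) (h : A ≤ B)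
    (w : ι → ℝ) : w ⬝ᵥ B⁻¹ *ᵥ w ≤ w ⬝ᵥ A⁻¹ *ᵥ w := by
  have hB := hA.of_le h
  set x := A⁻¹ *ᵥ w
  set y := B⁻¹ *ᵥ w
  have hAx : A *ᵥ x = w := by
    rw [mulVec_mulVec, mul_nonsing_inv A (A.isUnit_iff_isUnit_det.mp hA.isUnit), one_mulVec]
  have hBy : B *ᵥ y = w := by
    rw [mulVec_mulVec, mul_nonsing_inv B (B.isUnit_iff_isUnit_det.mp hB.isUnit), one_mulVec]
  -- `0 ≤ (x - y)ᵀA(x - y) = xᵀw - 2 yᵀw + yᵀAy` and `yᵀAy ≤ yᵀBy = yᵀw`.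
  have hnonneg := hA.posSemidef.dotProduct_mulVec_nonneg (x - y)
  have hyy := dotProduct_mulVec_le_of_le h y
  rw [star_trivial, mulVec_sub, dotProduct_sub, sub_dotProduct, sub_dotProduct,
    hA.isHermitian.dotProduct_mulVec_comm x y, hAx] at hnonneg
  rw [hBy] at hyy
  rw [dotProduct_comm w y, dotProduct_comm w x]
  linarith

theorem IsHermitian.iInf_eigenvalues_smul_one_le {A : Matrix ι ι ℝ} (hA : A.IsHermitian) :
    (⨅ i, hA.eigenvalues i) • (1 : Matrix ι ι ℝ) ≤ A := by
  rw [le_iff, posSemidef_iff_isHermitian_and_spectrum_nonneg]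
  refine ⟨hA.sub (isHermitian_one.smul (IsSelfAdjoint.all _)), ?_⟩
  rw [← Algebra.algebraMap_eq_smul_one, ← spectrum.sub_singleton_eq,
    hA.spectrum_real_eq_range_eigenvalues]
  rintro _ ⟨_, ⟨i, rfl⟩, _, rfl, rfl⟩
  exact sub_nonneg.2 (ciInf_le (Set.finite_range hA.eigenvalues).bddBelow i)

theorem IsHermitian.le_iSup_eigenvalues_smul_one {A : Matrix ι ι ℝ} (hA : A.IsHermitian) :
    A ≤ (⨆ i, hA.eigenvalues i) • (1 : Matrix ι ι ℝ) := by
  rw [le_iff, posSemidef_iff_isHermitian_and_spectrum_nonneg]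
  refine ⟨(isHermitian_one.smul (IsSelfAdjoint.all _)).sub hA, ?_⟩
  rw [← Algebra.algebraMap_eq_smul_one, ← spectrum.singleton_sub_eq,
    hA.spectrum_real_eq_range_eigenvalues]
  rintro _ ⟨_, rfl, _, ⟨i, rfl⟩, rfl⟩
  exact sub_nonneg.2 (le_ciSup (Set.finite_range hA.eigenvalues).bddAbove i)

theorem PosDef.iInf_eigenvalues_pos [Nonempty ι] {A : Matrix ι ι ℝ} (hA : A.PosDef) :
    0 < ⨅ i, hA.isHermitian.eigenvalues i := by
  obtain ⟨i, hi⟩ := exists_eq_ciInf_of_finite (f := hA.isHermitian.eigenvalues)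
  exact hi ▸ hA.eigenvalues_pos i

noncomputable def traceInvGain (A : Matrix ι ι ℝ) (u : ι → ℝ) : ℝ :=
  A⁻¹.trace - (A + vecMulVec u u)⁻¹.trace

theorem traceInvGain_eq {A : Matrix ι ι ℝ} (hA : A.PosDef) (u : ι → ℝ) :
    traceInvGain A u = (A⁻¹ *ᵥ u) ⬝ᵥ (A⁻¹ *ᵥ u) / (1 + u ⬝ᵥ A⁻¹ *ᵥ u) := by
  have hu : 0 ≤ u ⬝ᵥ A⁻¹ *ᵥ u := by simpa using hA.inv.posSemidef.dotProduct_mulVec_nonneg u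
  have hsymm : u ᵥ* A⁻¹ = A⁻¹ *ᵥ u := by
    rw [← mulVec_transpose, ← conjTranspose_eq_transpose_of_trivial, hA.inv.isHermitian.eq]
  rw [traceInvGain, inv_add_vecMulVec (A.isUnit_iff_isUnit_det.mp hA.isUnit) u u (by positivity),
    trace_sub, trace_smul, trace_vecMulVec, hsymm, smul_eq_mul, sub_sub_cancel, inv_mul_eq_div]

theorem div_mul_traceInvGain_le {A B : Matrix ι ι ℝ} {m M : ℝ} (hA : A.PosDef) (hAB : A ≤ B)
    (hM : 0 < M) (hAM : A ≤ M • 1) (hmB : m • 1 ≤ B) (u : ι → ℝ) :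
    m / M * traceInvGain B u ≤ traceInvGain A u := by
  have hB := hA.of_le hAB
  rw [traceInvGain_eq hA, traceInvGain_eq hB]
  have ha : u ⬝ᵥ A⁻¹ *ᵥ u ≤ M * ((A⁻¹ *ᵥ u) ⬝ᵥ (A⁻¹ *ᵥ u)) := by
    have := dotProduct_mulVec_le_of_le hAM (A⁻¹ *ᵥ u)
    rwa [← dotProduct_inv_mulVec_eq (A.isUnit_iff_isUnit_det.mp hA.isUnit), smul_mulVec,
      one_mulVec, dotProduct_smul, smul_eq_mul] at this
  have hb : m * ((B⁻¹ *ᵥ u) ⬝ᵥ (B⁻¹ *ᵥ u)) ≤ u ⬝ᵥ B⁻¹ *ᵥ u := by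
    have := dotProduct_mulVec_le_of_le hmB (B⁻¹ *ᵥ u)
    rwa [← dotProduct_inv_mulVec_eq (B.isUnit_iff_isUnit_det.mp hB.isUnit), smul_mulVec,
      one_mulVec, dotProduct_smul, smul_eq_mul] at this
  have hb0 : 0 ≤ u ⬝ᵥ B⁻¹ *ᵥ u := by simpa using hB.inv.posSemidef.dotProduct_mulVec_nonneg u
  have hba := dotProduct_inv_mulVec_le_of_le hA hAB u
  set a := u ⬝ᵥ A⁻¹ *ᵥ u
  set b := u ⬝ᵥ B⁻¹ *ᵥ u
  have ha0 : 0 ≤ a := hb0.trans hba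
  calc m / M * ((B⁻¹ *ᵥ u) ⬝ᵥ (B⁻¹ *ᵥ u) / (1 + b))
      = m * ((B⁻¹ *ᵥ u) ⬝ᵥ (B⁻¹ *ᵥ u)) / (1 + b) / M := by ring
    _ ≤ b / (1 + b) / M := by gcongr
    _ ≤ a / (1 + a) / M := by
      gcongr ?_ / M
      rw [div_le_div_iff₀ (by positivity) (by positivity)]
      linarith
    _ = a / M / (1 + a) := by ring
    _ ≤ (A⁻¹ *ᵥ u) ⬝ᵥ (A⁻¹ *ᵥ u) / (1 + a) := by
      gcongr ?_ / _
      rwa [div_le_iff₀' hM]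

end Fintype

end Matrix

theorem stmt_4 {n : ℕ} (hn : 0 < n) {ι : Type} [Fintype ι] [DecidableEq ι]
    (W₀ : Matrix (Fin n) (Fin n) ℝ) (hW₀ : W₀.PosDef) (v : ι → Fin n → ℝ)
    (W : Finset ι → Matrix (Fin n) (Fin n) ℝ)
    (hW : ∀ T : Finset ι, W T = W₀ + ∑ e ∈ T, Matrix.vecMulVec (v e) (v e))
    (E : Finset ι → ℝ) (hE : ∀ T : Finset ι, E T = ((W T)⁻¹).trace)
    (hherm : (W Finset.univ).IsHermitian)
    (α : ℝ)
    (hα : α = (⨅ i : Fin n, hW₀.isHermitian.eigenvalues i) /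
              (⨆ i : Fin n, hherm.eigenvalues i)) :
    0 < α ∧
      ∀ TA TB : Finset ι, TA ⊆ TB → ∀ e : ι, e ∉ TB →
        E TA - E (insert e TA) ≥ α * (E TB - E (insert e TB)) := by
  have : Nonempty (Fin n) := ⟨⟨0, hn⟩⟩
  have hmono : Monotone W := by
    intro S T hST
    rw [hW, hW, ← sum_sdiff hST, add_comm (∑ e ∈ T \ S, _), ← add_assoc]
    exact le_add_of_nonneg_right <| sum_nonneg fun e _ ↦ by
      simpa using (posSemidef_vecMulVec_self_star (v e)).nonneg
  have hW₀_le (T : Finset ι) : W₀ ≤ W T := by simpa [hW] using hmono (empty_subset T)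
  have hpos (T : Finset ι) : (W T).PosDef := hW₀.of_le (hW₀_le T)
  have hM : 0 < ⨆ i, hherm.eigenvalues i :=
    (hpos univ).iInf_eigenvalues_pos.trans_le <|
      ciInf_le_ciSup (Set.finite_range _).bddBelow (Set.finite_range _).bddAbove
  refine ⟨hα ▸ div_pos hW₀.iInf_eigenvalues_pos hM, fun TA TB hAB e he ↦ ?_⟩
  have hgain (T : Finset ι) (heT : e ∉ T) : E T - E (insert e T) = traceInvGain (W T) (v e) := by
    rw [hE, hE, traceInvGain, hW (insert e T), sum_insert heT, add_comm (vecMulVec _ _),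
      ← add_assoc, ← hW]
  rw [hgain TA (fun h ↦ he (hAB h)), hgain TB he, hα]
  exact div_mul_traceInvGain_le (hpos TA) (hmono hAB) hM
    ((hmono (subset_univ TA)).trans hherm.le_iSup_eigenvalues_smul_one)
    (hW₀.isHermitian.iInf_eigenvalues_smul_one_le.trans (hW₀_le TB)) (v e)
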